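/- For every nonnegative integer n, ∑_{k=0}^{n} C(2n-k, n) · H_k^2 = (1/2) · C(2n+1, n) · ( 2H_{n+1}^{(2)} - H_{2n+1}^{(2)} + 2H_{n+1}^2 - H_n^2 + H_{2n+1}(H_{2n+1} - 4H_{n+1} + 2H_n) ), where H_j and H_j^{(2)} are first- and second-order harmonic numbers. -/

import Mathlib

/-!
Write `Φ_a(N, s) = ∑_{k ≤ N} C(N-k, s) a_k`. The left side is `Φ_{H²}(2n, n)`, and since `H_k²`
is the partial sum of its increments `b_j = H_{j+1}² - H_j²`, it equals `Φ_b(2n, n+1)`.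
Pascal's rule gives `Φ(N+1, s+1) = Φ(N, s) + Φ(N, s+1)`, and absorption
`(s+1) C(m, s+1) = (m-s) C(m, s)` links `Φ_a(N, s+1)`, `Φ_a(N, s)` and `Φ_{(k+1)a}(N, s)`.
Together they express `Φ_b(2n+2, n+2)` through `Φ_b(2n, n+1)` and sums `Φ_c` with
`c_k = (k+1) b_k = H_k + H_{k+1}`, which are in closed form by the classical identity
`∑_{k ≤ N} C(N-k, s)/(k+1) = C(N+1, s) (H_{N+1} - H_s)`. Induction on `n` then leaves a rational
identity between harmonic numbers.
-/

open Finset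

noncomputable def H (n : ℕ) : ℝ := ∑ i ∈ Finset.range n, (1:ℝ)/(i+1)
noncomputable def H2 (n : ℕ) : ℝ := ∑ i ∈ Finset.range n, (1:ℝ)/((i:ℝ)+1)^2

section ChooseConv

variable {R : Type*}

def chooseConv [Semiring R] (a : ℕ → R) (N s : ℕ) : R :=
  ∑ k ∈ range (N + 1), ((N - k).choose s : R) * a k

theorem chooseConv_zero_right [Semiring R] (a : ℕ → R) (N : ℕ) :
    chooseConv a N 0 = ∑ k ∈ range (N + 1), a k := by
  simp [chooseConv]

theorem chooseConv_add [Semiring R] (a b : ℕ → R) (N s : ℕ) :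
    chooseConv (a + b) N s = chooseConv a N s + chooseConv b N s := by
  simp only [chooseConv, Pi.add_apply, mul_add, sum_add_distrib]

theorem chooseConv_succ_succ [Semiring R] (a : ℕ → R) (N s : ℕ) :
    chooseConv a (N + 1) (s + 1) = chooseConv a N s + chooseConv a N (s + 1) := by
  rw [chooseConv, sum_range_succ, Nat.sub_self, Nat.choose_zero_succ, Nat.cast_zero, zero_mul,
    add_zero, chooseConv, chooseConv, ← sum_add_distrib]
  refine sum_congr rfl fun k hk => ?_
  rw [Nat.succ_sub (mem_range_succ_iff.1 hk), Nat.choose_succ_succ', Nat.cast_add, add_mul]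

theorem chooseConv_partialSum [Semiring R] (w : ℕ → R) (N s : ℕ) :
    chooseConv (fun k => ∑ j ∈ range k, w j) N s = chooseConv w N (s + 1) := by
  induction N generalizing s with
  | zero => simp [chooseConv]
  | succ N ih =>
    cases s with
    | zero =>
      rw [chooseConv_zero_right, sum_range_succ, ← chooseConv_zero_right, ih,
        chooseConv_succ_succ, chooseConv_zero_right, add_comm]
    | succ s => rw [chooseConv_succ_succ, chooseConv_succ_succ, ih, ih]

theorem Nat.cast_choose_succ_right_eq [CommRing R] (m s : ℕ) :
    (m.choose (s + 1) : R) * (s + 1) = m.choose s * (m - s) := by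
  rcases le_or_gt s m with h | h
  · have h' := congrArg (Nat.cast (R := R)) (Nat.choose_succ_right_eq m s)
    push_cast [Nat.cast_sub h] at h'
    exact h'
  · simp [Nat.choose_eq_zero_of_lt h, Nat.choose_eq_zero_of_lt (h.trans s.lt_succ_self)]

theorem chooseConv_succ_right [CommRing R] (a : ℕ → R) (N s : ℕ) :
    (s + 1) * chooseConv a N (s + 1) =
      (N + 1 - s) * chooseConv a N s - chooseConv (fun k => (k + 1) * a k) N s := by
  simp only [chooseConv, mul_sum, ← sum_sub_distrib]
  refine sum_congr rfl fun k hk => ?_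
  have h := Nat.cast_choose_succ_right_eq (R := R) (N - k) s
  rw [Nat.cast_sub (mem_range_succ_iff.1 hk)] at h
  linear_combination a k * h

theorem chooseConv_two_mul_succ [CommRing R] (a : ℕ → R) (n : ℕ) :
    (n + 1) * (n + 2) * chooseConv a (2 * (n + 1)) (n + 2) =
      (n + 1) * (4 * n + 6) * chooseConv a (2 * n) (n + 1)
        + (n + 2) * chooseConv (fun k => (k + 1) * a k) (2 * n) n
        - (n + 1) * chooseConv (fun k => (k + 1) * a k) (2 * n) (n + 1) := by
  have pascal : chooseConv a (2 * (n + 1)) (n + 2) = chooseConv a (2 * n) n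
      + 2 * chooseConv a (2 * n) (n + 1) + chooseConv a (2 * n) (n + 2) := by
    rw [show 2 * (n + 1) = 2 * n + 1 + 1 by ring, chooseConv_succ_succ, chooseConv_succ_succ,
      chooseConv_succ_succ]
    ring
  have h₀ := chooseConv_succ_right a (2 * n) n
  have h₁ := chooseConv_succ_right a (2 * n) (n + 1)
  push_cast at h₀ h₁
  rw [pascal]
  linear_combination (n + 1 : R) * h₁ - (n + 2 : R) * h₀

end ChooseConv

theorem cast_choose_two_mul_add_one_add_two {K : Type*} [Field K] [CharZero K] (n : ℕ) :
    ((2 * n + 1).choose (n + 2) : K) = (2 * n + 1).choose n * n / (n + 2) := by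
  have h := Nat.cast_choose_succ_right_eq (R := K) (2 * n + 1) (n + 1)
  push_cast at h
  rw [eq_div_iff (by exact_mod_cast (show n + 2 ≠ 0 by omega)), ← Nat.choose_symm_half]
  linear_combination h

theorem cast_choose_two_mul_add_three {K : Type*} [Field K] [CharZero K] (n : ℕ) :
    ((2 * (n + 1) + 1).choose (n + 1) : K) = 2 * (2 * n + 3) * (2 * n + 1).choose n / (n + 2) := by
  have h₁ := Nat.add_one_mul_choose_eq (2 * n + 2) (n + 1)
  have h₂ := Nat.add_one_mul_choose_eq (2 * n + 1) n
  rw [show 2 * n + 1 + 1 = 2 * n + 2 by ring] at h₂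
  rw [← Nat.cast_inj (R := K)] at h₁ h₂
  rw [eq_div_iff (by exact_mod_cast (show n + 2 ≠ 0 by omega)), ← Nat.choose_symm_half,
    show 2 * (n + 1) + 1 = 2 * n + 2 + 1 by ring]
  push_cast at h₁ h₂ ⊢
  apply mul_left_cancel₀ (Nat.cast_add_one_ne_zero (R := K) n)
  linear_combination -(2 * n + 3 : K) * h₂ - (n + 1 : K) * h₁

theorem H_succ (n : ℕ) : H (n + 1) = H n + 1 / (n + 1) := by
  simp [H, sum_range_succ]

theorem H2_succ (n : ℕ) : H2 (n + 1) = H2 n + 1 / ((n : ℝ) + 1) ^ 2 := by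
  simp [H2, sum_range_succ]

theorem chooseConv_one_div_succ (N s : ℕ) :
    chooseConv (fun k => 1 / ((k : ℝ) + 1)) N s = (N + 1).choose s * (H (N + 1) - H s) := by
  induction N generalizing s with
  | zero =>
    rcases s with _ | _ | s
    · simp [chooseConv, H]
    · simp [chooseConv, H]
    · simp [chooseConv, Nat.choose_eq_zero_of_lt (show 1 < s + 2 by omega)]
  | succ N ih =>
    cases s with
    | zero => simp [chooseConv_zero_right, H]
    | succ s =>
      have h := Nat.add_one_mul_choose_eq (N + 1) s
      rw [Nat.choose_succ_succ' (N + 1), ← Nat.cast_inj (R := ℝ)] at h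
      rw [chooseConv_succ_succ, ih, ih, Nat.choose_succ_succ' (N + 1), H_succ (N + 1), H_succ s]
      push_cast at h ⊢
      field_simp
      linear_combination h

theorem chooseConv_H (N s : ℕ) :
    chooseConv H N s = (N + 1).choose (s + 1) * (H (N + 1) - H (s + 1)) :=
  (chooseConv_partialSum _ N s).trans (chooseConv_one_div_succ N (s + 1))


theorem chooseConv_succ_mul_H_sq_increment (N s : ℕ) :
    chooseConv (fun k => ((k : ℝ) + 1) * (H (k + 1) ^ 2 - H k ^ 2)) N s
      = 2 * (N + 1).choose (s + 1) * (H (N + 1) - H (s + 1))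
        + (N + 1).choose s * (H (N + 1) - H s) := by
  have hc : (fun k : ℕ => ((k : ℝ) + 1) * (H (k + 1) ^ 2 - H k ^ 2))
      = H + H + fun k : ℕ => 1 / ((k : ℝ) + 1) := by
    funext k
    simp only [Pi.add_apply, H_succ]
    field_simp
    ring
  rw [hc, chooseConv_add, chooseConv_add, chooseConv_H, chooseConv_one_div_succ]
  ring

theorem chooseConv_H_sq_increment_diag (n : ℕ) :
    chooseConv (fun j => H (j + 1) ^ 2 - H j ^ 2) (2 * n) (n + 1)
      = (1/2) * (((2*n+1).choose n : ℕ) : ℝ) *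
        (2 * H2 (n+1) - H2 (2*n+1) + 2 * (H (n+1))^2 - (H n)^2
          + H (2*n+1) * (H (2*n+1) - 4 * H (n+1) + 2 * H n)) := by
  induction n with
  | zero => norm_num [chooseConv, H, H2]
  | succ n ih =>
    have hrec := chooseConv_two_mul_succ (fun j => H (j + 1) ^ 2 - H j ^ 2) n
    rw [chooseConv_succ_mul_H_sq_increment, chooseConv_succ_mul_H_sq_increment, ih] at hrec
    have hC₁ : ((2 * n + 1).choose (n + 1) : ℝ) = (2 * n + 1).choose n := by
      rw [Nat.choose_symm_half]
    have hH₁ : H (2 * (n + 1) + 1) = H (2 * n + 1) + 1 / (2 * n + 2) + 1 / (2 * n + 3) := by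
      rw [show 2 * (n + 1) + 1 = 2 * n + 1 + 1 + 1 by ring, H_succ, H_succ]; push_cast; ring
    have hH₂ : H2 (2 * (n + 1) + 1)
        = H2 (2 * n + 1) + 1 / (2 * n + 2) ^ 2 + 1 / (2 * n + 3) ^ 2 := by
      rw [show 2 * (n + 1) + 1 = 2 * n + 1 + 1 + 1 by ring, H2_succ, H2_succ]; push_cast; ring
    have hH₃ : H (n + 1 + 1) = H n + 1 / (n + 1) + 1 / (n + 2) := by
      rw [H_succ, H_succ]; push_cast; ring
    have hH₄ : H2 (n + 1 + 1) = H2 (n + 1) + 1 / ((n : ℝ) + 2) ^ 2 := by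
      rw [H2_succ]; push_cast; ring
    apply mul_left_cancel₀ (show ((n : ℝ) + 1) * (n + 2) ≠ 0 by positivity)
    rw [hrec, hC₁, cast_choose_two_mul_add_one_add_two, cast_choose_two_mul_add_three,
      hH₁, hH₂, hH₃, hH₄, H_succ n]
    field_simp
    ring

theorem stmt3 (n : ℕ) :
    ∑ k ∈ Finset.range (n+1), (((2*n-k).choose n : ℕ) : ℝ) * (H k)^2
      = (1/2) * (((2*n+1).choose n : ℕ) : ℝ) *
        (2 * H2 (n+1) - H2 (2*n+1) + 2 * (H (n+1))^2 - (H n)^2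
          + H (2*n+1) * (H (2*n+1) - 4 * H (n+1) + 2 * H n)) := by
  have hext : ∑ k ∈ range (n + 1), ((2 * n - k).choose n : ℝ) * H k ^ 2
      = chooseConv (fun k => H k ^ 2) (2 * n) n := by
    refine sum_subset (range_subset_range.2 (by omega)) fun k hk hk' => ?_
    simp only [mem_range, not_lt] at hk hk'
    rw [Nat.choose_eq_zero_of_lt (by omega), Nat.cast_zero, zero_mul]
  have htelescope : (fun k => H k ^ 2) = fun k => ∑ j ∈ range k, (H (j + 1) ^ 2 - H j ^ 2) := by
    funext k
    rw [sum_range_sub (fun j => H j ^ 2)]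
    simp [H]
  rw [hext, htelescope, chooseConv_partialSum, chooseConv_H_sq_increment_diag]
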